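/- arXiv:2011.07408 — 2 statements merged into one kernel-verified Lean document; each statement's English description precedes it below -/
import Mathlib

section
/- The polynomials n_j = ∏_{g∈G}(g·f_j), for 1 ≤ j ≤ k, are G-invariant and satisfy n_j(v) = 1 if v ∈ W_j and n_j(v) = 0 otherwise, for every v ∈ V. Consequently, n_1, ..., n_k form a separating set for F_q[V]^G. -/
open MvPolynomial

/-- The substitution action of a matrix `M` on polynomials, so that
`(polyAct M f)(v) = f (M.mulVec v)`.  Taking `M = g⁻¹` gives the action
`(g · f)(v) = f (g⁻¹ · v)` of a matrix group on the coordinate ring. -/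
noncomputable def polyAct {F : Type*} [CommSemiring F] {n : ℕ}
    (M : Matrix (Fin n) (Fin n) F) (f : MvPolynomial (Fin n) F) : MvPolynomial (Fin n) F :=
  aeval (fun i => ∑ j, C (M i j) * X j) f

/-- `f_w = (-1)^n ∏_i ∏_{a ∈ F \ {w_i}} (x_i - a)`, the indicator polynomial of `w`. -/
noncomputable def fW {F : Type*} [Field F] [Fintype F] [DecidableEq F] {n : ℕ}
    (w : Fin n → F) : MvPolynomial (Fin n) F :=
  (-1) ^ n * ∏ i, ∏ a ∈ (Finset.univ \ {w i}), (X i - C a)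

/-- `f_j = ∑_{w ∈ W_j} f_w`, the indicator polynomial of the subset `W ⊆ V`. -/
noncomputable def fOrb {F : Type*} [Field F] [Fintype F] [DecidableEq F] {n : ℕ}
    (W : Set (Fin n → F)) : MvPolynomial (Fin n) F :=
  ∑ w ∈ (Set.toFinite W).toFinset, fW w

/-- `n_j = ∏_{g ∈ G} (g · f)`, where `(g · f)(v) = f(g⁻¹ · v)`. -/
noncomputable def nInvPoly {F : Type*} [Field F] [Fintype F] {n : ℕ}
    (G : Subgroup (Matrix.GeneralLinearGroup (Fin n) F)) (f : MvPolynomial (Fin n) F) :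
    MvPolynomial (Fin n) F :=
  letI : Fintype G := Fintype.ofFinite G
  ∏ g : G, polyAct (((g : Matrix.GeneralLinearGroup (Fin n) F)⁻¹ :
      Matrix.GeneralLinearGroup (Fin n) F) : Matrix (Fin n) (Fin n) F) f

/-- The Reynolds average `h = (1/|G|) ∑_{g ∈ G} (g · f)`. -/
noncomputable def reynolds {F : Type*} [Field F] [Fintype F] {n : ℕ}
    (G : Subgroup (Matrix.GeneralLinearGroup (Fin n) F)) (f : MvPolynomial (Fin n) F) :
    MvPolynomial (Fin n) F :=
  letI : Fintype G := Fintype.ofFinite G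
  C ((Nat.card G : F)⁻¹) * ∑ g : G, polyAct (((g : Matrix.GeneralLinearGroup (Fin n) F)⁻¹ :
      Matrix.GeneralLinearGroup (Fin n) F) : Matrix (Fin n) (Fin n) F) f

/-- A monomial matrix: exactly one nonzero entry in each row and in each column. -/
def IsMonomialMatrix {F : Type*} [Zero F] {n : ℕ} (M : Matrix (Fin n) (Fin n) F) : Prop :=
  (∀ i, ∃! j, M i j ≠ 0) ∧ (∀ j, ∃! i, M i j ≠ 0)

/-! The `f_w` are indicator polynomials because `∏_{a ≠ c} (c - a) = ∏_{b ≠ 0} b = -1` in a finite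
field (Wilson), so `f_j` is the indicator of the orbit `W_j`. Since `W_j` is `G`-stable, every
factor `g · f_j` of `n_j` is again that indicator, while acting by `g ∈ G` only permutes the
factors of `n_j`. Indicators of the orbits separate the orbits. -/

section PolyAct

variable {R : Type*} [CommSemiring R] {n : ℕ}

lemma eval_polyAct (M : Matrix (Fin n) (Fin n) R) (f : MvPolynomial (Fin n) R) (v : Fin n → R) :
    eval v (polyAct M f) = eval (M.mulVec v) f := by
  change aeval v (aeval _ f) = aeval (M.mulVec v) f
  rw [← AlgHom.comp_apply, comp_aeval]
  congr 2
  ext i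
  simp [Matrix.mulVec, dotProduct]

lemma polyAct_polyAct (M N : Matrix (Fin n) (Fin n) R) (f : MvPolynomial (Fin n) R) :
    polyAct M (polyAct N f) = polyAct (N * M) f := by
  rw [polyAct, polyAct, polyAct, ← AlgHom.comp_apply, comp_aeval]
  congr 2
  ext i : 1
  simp only [map_sum, map_mul, aeval_C, aeval_X, algebraMap_eq, Matrix.mul_apply, Finset.mul_sum,
    Finset.sum_mul, mul_assoc]
  exact Finset.sum_comm

lemma polyAct_prod {ι : Type*} (s : Finset ι) (M : Matrix (Fin n) (Fin n) R)
    (f : ι → MvPolynomial (Fin n) R) :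
    polyAct M (∏ i ∈ s, f i) = ∏ i ∈ s, polyAct M (f i) :=
  map_prod _ _ _

end PolyAct

section FiniteField

variable {F : Type*} [Field F] [Fintype F] [DecidableEq F] {n : ℕ}

lemma prod_sdiff_singleton_sub_eq_neg_one (c : F) : ∏ a ∈ Finset.univ \ {c}, (c - a) = -1 := by
  have hmem : ∀ a ∈ Finset.univ \ {c}, c - a ≠ 0 := fun a ha =>
    sub_ne_zero.mpr (Ne.symm (by simpa using ha))
  calc ∏ a ∈ Finset.univ \ {c}, (c - a) = ∏ u : Fˣ, (u : F) :=
        Finset.prod_bij' (fun a ha => Units.mk0 (c - a) (hmem a ha)) (fun u _ => c - u)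
          (by simp) (fun u _ => by simp) (fun a _ => by simp) (fun u _ => by ext; simp)
          (fun a _ => rfl)
    _ = -1 := by
      rw [← Units.coe_prod, FiniteField.prod_univ_units_id_eq_neg_one, Units.val_neg, Units.val_one]

lemma eval_fW (w v : Fin n → F) : eval v (fW w) = if v = w then 1 else 0 := by
  simp only [fW, map_mul, map_pow, map_neg, map_one, map_prod, map_sub, eval_X, eval_C]
  split_ifs with h
  · simp [h, prod_sdiff_singleton_sub_eq_neg_one, ← mul_pow]
  · obtain ⟨i, hi⟩ := Function.ne_iff.mp h
    rw [Finset.prod_eq_zero (Finset.mem_univ i)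
      (Finset.prod_eq_zero (i := v i) (by simp [hi]) (sub_self _)), mul_zero]

lemma eval_fOrb (W : Set (Fin n → F)) (v : Fin n → F) :
    eval v (fOrb W) = W.indicator 1 v := by
  classical
  simp [fOrb, eval_fW, Set.indicator_apply]

end FiniteField

section Orbits

variable {F : Type*} [CommRing F] {n : ℕ} {G : Subgroup (Matrix.GeneralLinearGroup (Fin n) F)}

def matrixOrbit (G : Subgroup (Matrix.GeneralLinearGroup (Fin n) F)) (w : Fin n → F) :
    Set (Fin n → F) :=
  {u | ∃ g ∈ G, (g : Matrix (Fin n) (Fin n) F).mulVec w = u}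

lemma mulVec_mem_matrixOrbit {g : Matrix.GeneralLinearGroup (Fin n) F} {w v : Fin n → F}
    (hg : g ∈ G) (hv : v ∈ matrixOrbit G w) :
    (g : Matrix (Fin n) (Fin n) F).mulVec v ∈ matrixOrbit G w := by
  obtain ⟨h, hh, rfl⟩ := hv
  exact ⟨g * h, mul_mem hg hh, by rw [Units.val_mul, Matrix.mulVec_mulVec]⟩

lemma exists_mulVec_eq_of_mem_matrixOrbit {w u v : Fin n → F} (hu : u ∈ matrixOrbit G w)
    (hv : v ∈ matrixOrbit G w) : ∃ g ∈ G, (g : Matrix (Fin n) (Fin n) F).mulVec u = v := by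
  obtain ⟨a, ha, rfl⟩ := hu
  obtain ⟨b, hb, rfl⟩ := hv
  refine ⟨b * a⁻¹, mul_mem hb (inv_mem ha), ?_⟩
  rw [Matrix.mulVec_mulVec, ← Units.val_mul, inv_mul_cancel_right]

end Orbits

section Invariants

variable {F : Type*} [Field F] [Fintype F] {n : ℕ} (G : Subgroup (Matrix.GeneralLinearGroup (Fin n) F))

lemma polyAct_nInvPoly {g : Matrix.GeneralLinearGroup (Fin n) F} (hg : g ∈ G)
    (f : MvPolynomial (Fin n) F) :
    polyAct ((g⁻¹ : Matrix.GeneralLinearGroup (Fin n) F) : Matrix (Fin n) (Fin n) F)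
      (nInvPoly G f) = nInvPoly G f := by
  let : Fintype G := Fintype.ofFinite G
  rw [nInvPoly, polyAct_prod]
  refine Fintype.prod_equiv (Equiv.mulLeft ⟨g, hg⟩) _ _ fun h => ?_
  rw [polyAct_polyAct, Equiv.coe_mulLeft, Subgroup.coe_mul, mul_inv_rev, Units.val_mul]

lemma eval_nInvPoly [DecidableEq F] {S : Set (Fin n → F)}
    (hS : ∀ g ∈ G, ∀ v ∈ S, (g : Matrix (Fin n) (Fin n) F).mulVec v ∈ S) (v : Fin n → F) :
    eval v (nInvPoly G (fOrb S)) = S.indicator 1 v := by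
  let : Fintype G := Fintype.ofFinite G
  simp only [nInvPoly, map_prod, eval_polyAct, eval_fOrb]
  by_cases hv : v ∈ S
  · rw [Set.indicator_of_mem hv]
    exact Finset.prod_eq_one fun g _ => Set.indicator_of_mem (hS _ (inv_mem g.2) v hv) 1
  · rw [Set.indicator_of_notMem hv]
    exact Finset.prod_eq_zero (Finset.mem_univ 1) (by simp [hv])

end Invariants

theorem stmt2_general {n k : ℕ} (F : Type*) [Field F] [Fintype F] [DecidableEq F]
    (G : Subgroup (Matrix.GeneralLinearGroup (Fin n) F))
    (W : Fin k → Set (Fin n → F))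
    (horb : ∀ j, ∃ w : Fin n → F, W j =
      {u | ∃ g ∈ G, (g : Matrix (Fin n) (Fin n) F).mulVec w = u})
    (hcover : ∀ v : Fin n → F, ∃ j, v ∈ W j) :
    -- the n_j are invariants
    (∀ j, ∀ g ∈ G,
      polyAct ((g⁻¹ : Matrix.GeneralLinearGroup (Fin n) F) : Matrix (Fin n) (Fin n) F)
        (nInvPoly G (fOrb (W j))) = nInvPoly G (fOrb (W j))) ∧
    -- values: n_j(v) = 1 if v ∈ W_j and n_j(v) = 0 otherwise
    (∀ j, ∀ v : Fin n → F,
      (v ∈ W j → eval v (nInvPoly G (fOrb (W j))) = 1) ∧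
      (v ∉ W j → eval v (nInvPoly G (fOrb (W j))) = 0)) ∧
    -- consequently n_1, …, n_k form a separating set
    (∀ u v : Fin n → F,
      (¬ ∃ g ∈ G, (g : Matrix (Fin n) (Fin n) F).mulVec u = v) →
      ∃ j, eval u (nInvPoly G (fOrb (W j))) ≠ eval v (nInvPoly G (fOrb (W j)))) := by
  have hval : ∀ j v, eval v (nInvPoly G (fOrb (W j))) = (W j).indicator 1 v := by
    intro j
    obtain ⟨w, hw⟩ := horb j
    exact hw ▸ eval_nInvPoly G fun g hg v hv => mulVec_mem_matrixOrbit hg hv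
  refine ⟨fun j g hg => polyAct_nInvPoly G hg _,
    fun j v => ⟨fun hv => by simp [hval, hv], fun hv => by simp [hval, hv]⟩, ?_⟩
  intro u v hne
  obtain ⟨j, hu⟩ := hcover u
  have hv : v ∉ W j := by
    obtain ⟨w, hw⟩ := horb j
    rw [hw] at hu ⊢
    exact fun hv => hne (exists_mulVec_eq_of_mem_matrixOrbit hu hv)
  exact ⟨j, by simp [hval, hu, hv]⟩

/-- the polynomials `n_j = ∏_{g ∈ G} (g·f_j)` are `G`-invariant, take the
value `1` on `W_j` and `0` elsewhere, and hence form a separating set for `F_q[V]^G`. -/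
theorem stmt2 {q n k : ℕ} (F : Type*) [Field F] [Fintype F] [DecidableEq F]
    (hq : Fintype.card F = q)
    (G : Subgroup (Matrix.GeneralLinearGroup (Fin n) F))
    (W : Fin k → Set (Fin n → F))
    (horb : ∀ j, ∃ w : Fin n → F, W j =
      {u | ∃ g ∈ G, (g : Matrix (Fin n) (Fin n) F).mulVec w = u})
    (hcover : ∀ v : Fin n → F, ∃ j, v ∈ W j)
    (hdisj : ∀ j₁ j₂, j₁ ≠ j₂ → Disjoint (W j₁) (W j₂)) :
    -- the n_j are invariants
    (∀ j, ∀ g ∈ G,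
      polyAct ((g⁻¹ : Matrix.GeneralLinearGroup (Fin n) F) : Matrix (Fin n) (Fin n) F)
        (nInvPoly G (fOrb (W j))) = nInvPoly G (fOrb (W j))) ∧
    -- values: n_j(v) = 1 if v ∈ W_j and n_j(v) = 0 otherwise
    (∀ j, ∀ v : Fin n → F,
      (v ∈ W j → eval v (nInvPoly G (fOrb (W j))) = 1) ∧
      (v ∉ W j → eval v (nInvPoly G (fOrb (W j))) = 0)) ∧
    -- consequently n_1, …, n_k form a separating set
    (∀ u v : Fin n → F,
      (¬ ∃ g ∈ G, (g : Matrix (Fin n) (Fin n) F).mulVec u = v) →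
      ∃ j, eval u (nInvPoly G (fOrb (W j))) ≠ eval v (nInvPoly G (fOrb (W j)))) :=
  stmt2_general F G W horb hcover
end

section
/- For the action of S_4 on V = F_2^6 coming from its action on 2-element subsets of {1,2,3,4}, the sets S_3 = {f_1, f_2, f_3, f_4 + f_8} and S_4 = {f_1, f_2, f_3, f_5 + f_8} are separating sets for F_2[V]^{S_4} of the smallest possible size 4; in particular, β_sep(F_2[V]^{S_4}) = 4, i.e., the homogeneous invariants of degree at most 4 separate the S_4-orbits on V and 4 is the least such degree bound. -/
/-!
Every point of `V` is the indicator of a graph on four vertices, and every such graph is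
isomorphic to one of eleven representatives, which are pairwise non-isomorphic. Each `f_k` is
the orbit sum of a squarefree monomial, so at the point of a graph `G` it is the parity of the
number of subgraphs of `G` of a fixed isomorphism type; a finite computation of these parities
shows that both sets separate the representatives. As `11 > 2 ^ 3`, no three `𝔽₂`-valued
functions separate them, and the homogeneous invariants of degree `≤ 4` include
`f_1, f_2, f_3, f_4, f_8`, which determine `f_4 + f_8`.

For the lower bound on `β_sep`, evaluation of `f` over `𝔽₂` at the indicator of a graph `W`
counts the monomials of `f` supported in `W`. The rotation of a 4-cycle `C` permutes the
nonconstant monomials supported in `C`, and fixes none of degree `< 4`; since it has order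
`4`, such monomials of an invariant of degree `≤ 3` come in an even number. Hence every such
invariant takes the same value at `C` and at the empty graph.
-/

open MvPolynomial

/-- 2-element subsets of `Fin N`, encoded as ordered pairs `(i, j)` with `i < j`. -/
abbrev Edge (N : ℕ) := {p : Fin N × Fin N // p.1 < p.2}

/-- The action of a permutation `σ ∈ S_N` on edges: `σ·{i,j} = {σ(i),σ(j)}`. -/
def edgeMap {N : ℕ} (σ : Equiv.Perm (Fin N)) (e : Edge N) : Edge N :=
  ⟨(min (σ e.1.1) (σ e.1.2), max (σ e.1.1) (σ e.1.2)), by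
    have h : σ e.1.1 ≠ σ e.1.2 := fun h => absurd (σ.injective h) (ne_of_lt e.2)
    exact min_lt_max.mpr h⟩

/-- orbit sum `o(f)`: the sum over the (distinct elements of the) `S_N`-orbit of `f`. -/
noncomputable def orbitSum {N : ℕ} (f : MvPolynomial (Edge N) (ZMod 2)) :
    MvPolynomial (Edge N) (ZMod 2) :=
  letI : DecidableEq (MvPolynomial (Edge N) (ZMod 2)) := Classical.decEq _
  ∑ h ∈ Finset.image (fun σ : Equiv.Perm (Fin N) => rename (edgeMap σ) f) Finset.univ, h

/-- Two points of `V = F_2^(N choose 2)` lie in the same `S_N`-orbit. -/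
def GraphSameOrbit {N : ℕ} (u v : Edge N → ZMod 2) : Prop :=
  ∃ σ : Equiv.Perm (Fin N), ∀ e, u (edgeMap σ e) = v e

/-- A set of polynomials is separating if it separates any two points of `V`
lying in different `S_N`-orbits. -/
def IsSepGraph {N : ℕ} (S : Set (MvPolynomial (Edge N) (ZMod 2))) : Prop :=
  ∀ u v : Edge N → ZMod 2, ¬ GraphSameOrbit u v → ∃ f ∈ S, eval u f ≠ eval v f
namespace S4graphs

/- The six edges of the complete graph on `{1,2,3,4}` (0-indexed), ordered
x12, x13, x14, x23, x24, x34. -/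
def e12 : Edge 4 := ⟨(0, 1), by decide⟩
def e13 : Edge 4 := ⟨(0, 2), by decide⟩
def e14 : Edge 4 := ⟨(0, 3), by decide⟩
def e23 : Edge 4 := ⟨(1, 2), by decide⟩
def e24 : Edge 4 := ⟨(1, 3), by decide⟩
def e34 : Edge 4 := ⟨(2, 3), by decide⟩

noncomputable def f1 : MvPolynomial (Edge 4) (ZMod 2) := orbitSum (X e12)
noncomputable def f2 : MvPolynomial (Edge 4) (ZMod 2) := orbitSum (X e12 * X e13)
noncomputable def f3 : MvPolynomial (Edge 4) (ZMod 2) := orbitSum (X e12 * X e34)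
noncomputable def f4 : MvPolynomial (Edge 4) (ZMod 2) := orbitSum (X e12 * X e13 * X e14)
noncomputable def f5 : MvPolynomial (Edge 4) (ZMod 2) := orbitSum (X e12 * X e13 * X e23)
noncomputable def f6 : MvPolynomial (Edge 4) (ZMod 2) := orbitSum (X e12 * X e13 * X e24)
noncomputable def f7 : MvPolynomial (Edge 4) (ZMod 2) :=
  orbitSum (X e12 * X e13 * X e14 * X e24)
noncomputable def f8 : MvPolynomial (Edge 4) (ZMod 2) :=
  orbitSum (X e12 * X e13 * X e24 * X e34)
noncomputable def f9 : MvPolynomial (Edge 4) (ZMod 2) :=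
  orbitSum (X e12 * X e13 * X e14 * X e23 * X e24)
noncomputable def f10 : MvPolynomial (Edge 4) (ZMod 2) :=
  X e12 * X e13 * X e14 * X e23 * X e24 * X e34

/-- A polynomial is `S_4`-invariant. -/
def IsInv (f : MvPolynomial (Edge 4) (ZMod 2)) : Prop :=
  ∀ σ : Equiv.Perm (Fin 4), rename (edgeMap σ) f = f

/-- The set of all `S_4`-invariant homogeneous polynomials of degree at most `d`. -/
def HomInv (d : ℕ) : Set (MvPolynomial (Edge 4) (ZMod 2)) :=
  {f | IsInv f ∧ ∃ e ≤ d, f.IsHomogeneous e}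

end S4graphs

open Finset

section EdgeAction

variable {N : ℕ}

theorem edgeMap_one (e : Edge N) : edgeMap 1 e = e :=
  Subtype.ext <| Prod.ext (min_eq_left e.2.le) (max_eq_right e.2.le)

theorem edgeMap_mul (σ τ : Equiv.Perm (Fin N)) (e : Edge N) :
    edgeMap (σ * τ) e = edgeMap σ (edgeMap τ e) := by
  apply Subtype.ext
  simp only [edgeMap, Equiv.Perm.mul_apply]
  rcases le_total (τ e.1.1) (τ e.1.2) with h | h
  · rw [min_eq_left h, max_eq_right h]
  · rw [min_eq_right h, max_eq_left h, min_comm, max_comm]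

theorem edgeMap_inv_edgeMap (σ : Equiv.Perm (Fin N)) (e : Edge N) :
    edgeMap σ⁻¹ (edgeMap σ e) = e := by
  rw [← edgeMap_mul, inv_mul_cancel, edgeMap_one]

theorem edgeMap_edgeMap_inv (σ : Equiv.Perm (Fin N)) (e : Edge N) :
    edgeMap σ (edgeMap σ⁻¹ e) = e := by
  simpa using edgeMap_inv_edgeMap σ⁻¹ e

theorem edgeMap_injective (σ : Equiv.Perm (Fin N)) : Function.Injective (edgeMap σ) :=
  Function.LeftInverse.injective (edgeMap_inv_edgeMap σ)

theorem rename_edgeMap_rename_edgeMap (σ τ : Equiv.Perm (Fin N))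
    (f : MvPolynomial (Edge N) (ZMod 2)) :
    rename (edgeMap σ) (rename (edgeMap τ) f) = rename (edgeMap (σ * τ)) f := by
  rw [rename_rename]
  exact congrArg (rename · f) (funext fun e => (edgeMap_mul σ τ e).symm)

theorem GraphSameOrbit.symm {u v : Edge N → ZMod 2} (h : GraphSameOrbit u v) :
    GraphSameOrbit v u := by
  obtain ⟨σ, hσ⟩ := h
  exact ⟨σ⁻¹, fun e => by rw [← hσ, edgeMap_edgeMap_inv]⟩

theorem GraphSameOrbit.trans {u v w : Edge N → ZMod 2} (huv : GraphSameOrbit u v)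
    (hvw : GraphSameOrbit v w) : GraphSameOrbit u w := by
  obtain ⟨σ, hσ⟩ := huv
  obtain ⟨τ, hτ⟩ := hvw
  exact ⟨σ * τ, fun e => by rw [edgeMap_mul, hσ, hτ]⟩

theorem IsSepGraph.of_determines {S T : Set (MvPolynomial (Edge N) (ZMod 2))}
    (hS : IsSepGraph S)
    (hST : ∀ f ∈ S, ∀ u v, (∀ g ∈ T, eval u g = eval v g) → eval u f = eval v f) :
    IsSepGraph T := by
  intro u v huv
  obtain ⟨f, hf, hne⟩ := hS u v huv
  by_contra! hT
  exact hne (hST f hf u v hT)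

end EdgeAction

section OrbitSum

variable {N : ℕ}

theorem orbitSum_eq [DecidableEq (MvPolynomial (Edge N) (ZMod 2))]
    (f : MvPolynomial (Edge N) (ZMod 2)) :
    orbitSum f = ∑ g ∈ univ.image fun σ : Equiv.Perm (Fin N) => rename (edgeMap σ) f, g := by
  unfold orbitSum
  congr
  exact Subsingleton.elim _ _

theorem rename_edgeMap_orbitSum (σ : Equiv.Perm (Fin N))
    (f : MvPolynomial (Edge N) (ZMod 2)) :
    rename (edgeMap σ) (orbitSum f) = orbitSum f := by
  classical
  have horbit : (univ.image fun τ : Equiv.Perm (Fin N) => rename (edgeMap τ) f).image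
      (rename (edgeMap σ)) = univ.image fun τ : Equiv.Perm (Fin N) => rename (edgeMap τ) f := by
    ext g
    simp only [image_image, Function.comp_def, rename_edgeMap_rename_edgeMap, mem_image, mem_univ,
      true_and]
    exact ⟨fun ⟨τ, h⟩ => ⟨σ * τ, h⟩, fun ⟨τ, h⟩ => ⟨σ⁻¹ * τ, by rwa [mul_inv_cancel_left]⟩⟩
  rw [orbitSum_eq, map_sum]
  conv_rhs => rw [← horbit]
  rw [sum_image fun g _ h _ hgh => rename_injective _ (edgeMap_injective σ) hgh]

theorem MvPolynomial.IsHomogeneous.orbitSum {f : MvPolynomial (Edge N) (ZMod 2)} {n : ℕ}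
    (hf : f.IsHomogeneous n) : (orbitSum f).IsHomogeneous n := by
  classical
  rw [orbitSum_eq]
  exact IsHomogeneous.sum _ _ _ fun g hg => by
    obtain ⟨σ, -, rfl⟩ := mem_image.mp hg
    exact hf.rename_isHomogeneous

end OrbitSum

section IndicatorPoints

variable {σ : Type*} [DecidableEq σ]

theorem eval_indicator_prod_X {R : Type*} [CommSemiring R] (W C : Finset σ) :
    eval (fun i => if i ∈ W then (1 : R) else 0) (∏ i ∈ C, X i) = if C ⊆ W then 1 else 0 := by
  rw [map_prod]
  simp only [eval_X]
  exact prod_boole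

theorem prod_X_injective {R : Type*} [CommSemiring R] [Nontrivial R] :
    Function.Injective fun C : Finset σ => (∏ i ∈ C, X i : MvPolynomial σ R) := by
  have subset_of_eq : ∀ B C : Finset σ,
      (∏ i ∈ B, X i : MvPolynomial σ R) = ∏ i ∈ C, X i → C ⊆ B := by
    intro B C h
    have h1 := congrArg (eval fun i => if i ∈ B then (1 : R) else 0) h
    rw [eval_indicator_prod_X, eval_indicator_prod_X, if_pos Subset.rfl] at h1
    by_contra hCB
    rw [if_neg hCB] at h1
    exact one_ne_zero h1
  exact fun B C h => Subset.antisymm (subset_of_eq C B h.symm) (subset_of_eq B C h)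

theorem eval_indicator_eq_card (W : Finset σ) (f : MvPolynomial σ (ZMod 2)) :
    eval (fun i => if i ∈ W then 1 else 0) f = #{d ∈ f.support | d.support ⊆ W} := by
  rw [eval_eq, natCast_card_filter]
  refine sum_congr rfl fun d hd => ?_
  have hcoeff : coeff d f = 1 := by
    have hne := mem_support_iff.mp hd
    generalize coeff d f = c at hne ⊢
    decide +revert
  rw [hcoeff, one_mul]
  have hpow : ∀ i ∈ d.support,
      (if i ∈ W then (1 : ZMod 2) else 0) ^ d i = if i ∈ W then 1 else 0 :=
    fun i hi => by split_ifs <;> simp [Finsupp.mem_support_iff.mp hi]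
  rw [prod_congr rfl hpow, prod_boole]
  rfl

theorem card_filter_support_subset (s : Finset (σ →₀ ℕ)) (W : Finset σ) :
    #{d ∈ s | d.support ⊆ W} =
      #{d ∈ s | d.support ⊆ ∅} + #{d ∈ s | d ≠ 0 ∧ d.support ⊆ W} := by
  rw [← card_filter_add_card_filter_not (s := {d ∈ s | d.support ⊆ W}) (fun d => d = 0),
    filter_filter, filter_filter]
  congr 2
  · exact filter_congr fun d _ => by
      rw [subset_empty, Finsupp.support_eq_empty]
      exact ⟨And.right, fun h => ⟨by simp [h], h⟩⟩
  · exact filter_congr fun d _ => and_comm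

end IndicatorPoints

section SquarefreeOrbits

variable {N : ℕ}

def edgeOrbit (A : Finset (Edge N)) : Finset (Finset (Edge N)) :=
  univ.image fun σ => A.image (edgeMap σ)

def subgraphParity (D : Finset (Finset (Edge N))) (u : Edge N → ZMod 2) : ZMod 2 :=
  ∑ B ∈ D, ∏ e ∈ B, u e

theorem orbitSum_prod_X (A : Finset (Edge N)) :
    orbitSum (∏ e ∈ A, X e) =
      ∑ B ∈ edgeOrbit A, ∏ e ∈ B, (X e : MvPolynomial (Edge N) (ZMod 2)) := by
  classical
  have hrename : ∀ σ : Equiv.Perm (Fin N), rename (edgeMap σ) (∏ e ∈ A, X e) =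
      ∏ e ∈ A.image (edgeMap σ), (X e : MvPolynomial (Edge N) (ZMod 2)) := fun σ => by
    rw [map_prod, prod_image fun x _ y _ h => edgeMap_injective σ h]
    simp only [rename_X]
  have himage : (univ.image fun σ : Equiv.Perm (Fin N) => ∏ e ∈ A.image (edgeMap σ), X e) =
      (edgeOrbit A).image fun B => (∏ e ∈ B, X e : MvPolynomial (Edge N) (ZMod 2)) := by
    rw [edgeOrbit, image_image]
    rfl
  simp only [orbitSum_eq, hrename, himage]
  exact sum_image fun B _ C _ h => prod_X_injective h

theorem eval_orbitSum_prod_X (A : Finset (Edge N)) (u : Edge N → ZMod 2) :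
    eval u (orbitSum (∏ e ∈ A, X e)) = subgraphParity (edgeOrbit A) u := by
  simp only [orbitSum_prod_X, map_sum, map_prod, eval_X, subgraphParity]

end SquarefreeOrbits

namespace S4graphs

theorem isInv_orbitSum (f : MvPolynomial (Edge 4) (ZMod 2)) : IsInv (orbitSum f) :=
  fun σ => rename_edgeMap_orbitSum σ f

theorem IsInv.add {f g : MvPolynomial (Edge 4) (ZMod 2)} (hf : IsInv f) (hg : IsInv g) :
    IsInv (f + g) :=
  fun σ => by rw [map_add, hf σ, hg σ]

theorem IsInv.eval_eq {f : MvPolynomial (Edge 4) (ZMod 2)} (hf : IsInv f)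
    {u v : Edge 4 → ZMod 2} (huv : GraphSameOrbit u v) : eval u f = eval v f := by
  obtain ⟨σ, hσ⟩ := huv
  rw [show v = u ∘ edgeMap σ from funext fun e => (hσ e).symm, ← eval_rename, hf σ]

def edges : Finset (Finset (Edge 4)) := {{e12}, {e13}, {e14}, {e23}, {e24}, {e34}}

def cherries : Finset (Finset (Edge 4)) :=
  {{e12, e13}, {e12, e14}, {e12, e23}, {e12, e24}, {e13, e14}, {e13, e23},
   {e13, e34}, {e14, e24}, {e14, e34}, {e23, e24}, {e23, e34}, {e24, e34}}

def perfectMatchings : Finset (Finset (Edge 4)) := {{e12, e34}, {e13, e24}, {e14, e23}}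

def claws : Finset (Finset (Edge 4)) :=
  {{e12, e13, e14}, {e12, e23, e24}, {e13, e23, e34}, {e14, e24, e34}}

def triangles : Finset (Finset (Edge 4)) :=
  {{e12, e13, e23}, {e12, e14, e24}, {e13, e14, e34}, {e23, e24, e34}}

def fourCycles : Finset (Finset (Edge 4)) :=
  {{e12, e13, e24, e34}, {e12, e14, e23, e34}, {e13, e14, e23, e24}}

theorem eval_f1 (u : Edge 4 → ZMod 2) : eval u f1 = subgraphParity edges u := by
  have hf1 : f1 = orbitSum (∏ e ∈ {e12}, X e) := by
    rw [f1, prod_singleton]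
  rw [hf1, eval_orbitSum_prod_X, show edgeOrbit {e12} = edges by decide]

theorem eval_f2 (u : Edge 4 → ZMod 2) : eval u f2 = subgraphParity cherries u := by
  have hf2 : f2 = orbitSum (∏ e ∈ {e12, e13}, X e) := by
    rw [f2, prod_insert (by decide), prod_singleton]
  rw [hf2, eval_orbitSum_prod_X, show edgeOrbit {e12, e13} = cherries by decide]

theorem eval_f3 (u : Edge 4 → ZMod 2) : eval u f3 = subgraphParity perfectMatchings u := by
  have hf3 : f3 = orbitSum (∏ e ∈ {e12, e34}, X e) := by
    rw [f3, prod_insert (by decide), prod_singleton]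
  rw [hf3, eval_orbitSum_prod_X, show edgeOrbit {e12, e34} = perfectMatchings by decide]

theorem eval_f4 (u : Edge 4 → ZMod 2) : eval u f4 = subgraphParity claws u := by
  have hf4 : f4 = orbitSum (∏ e ∈ {e12, e13, e14}, X e) := by
    rw [f4, prod_insert (by decide), prod_insert (by decide), prod_singleton, mul_assoc]
  rw [hf4, eval_orbitSum_prod_X, show edgeOrbit {e12, e13, e14} = claws by decide]

theorem eval_f5 (u : Edge 4 → ZMod 2) : eval u f5 = subgraphParity triangles u := by
  have hf5 : f5 = orbitSum (∏ e ∈ {e12, e13, e23}, X e) := by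
    rw [f5, prod_insert (by decide), prod_insert (by decide), prod_singleton, mul_assoc]
  rw [hf5, eval_orbitSum_prod_X, show edgeOrbit {e12, e13, e23} = triangles by decide]

theorem eval_f8 (u : Edge 4 → ZMod 2) : eval u f8 = subgraphParity fourCycles u := by
  have hf8 : f8 = orbitSum (∏ e ∈ {e12, e13, e24, e34}, X e) := by
    rw [f8, prod_insert (by decide), prod_insert (by decide), prod_insert (by decide),
      prod_singleton, mul_assoc, mul_assoc]
  rw [hf8, eval_orbitSum_prod_X, show edgeOrbit {e12, e13, e24, e34} = fourCycles by decide]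

def repGraph : Fin 11 → Finset (Edge 4) :=
  ![∅, {e12}, {e12, e13}, {e12, e34}, {e12, e13, e14}, {e12, e13, e23}, {e12, e13, e24},
    {e12, e13, e14, e23}, {e12, e13, e24, e34}, {e12, e13, e14, e23, e24}, univ]

def rep (i : Fin 11) : Edge 4 → ZMod 2 := fun e => if e ∈ repGraph i then 1 else 0

set_option maxRecDepth 4000 in
theorem exists_graphSameOrbit_rep : ∀ u : Edge 4 → ZMod 2, ∃ i, GraphSameOrbit u (rep i) := by
  unfold GraphSameOrbit
  decide

theorem not_graphSameOrbit_rep :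
    ∀ i j : Fin 11, i ≠ j → ¬ GraphSameOrbit (rep i) (rep j) := by
  unfold GraphSameOrbit
  decide

theorem isSepGraph_of_separates_reps {S : Set (MvPolynomial (Edge 4) (ZMod 2))}
    (hS : ∀ f ∈ S, IsInv f)
    (hsep : ∀ i j, i ≠ j → ∃ f ∈ S, eval (rep i) f ≠ eval (rep j) f) :
    IsSepGraph S := by
  intro u v huv
  obtain ⟨i, hi⟩ := exists_graphSameOrbit_rep u
  obtain ⟨j, hj⟩ := exists_graphSameOrbit_rep v
  have hij : i ≠ j := by
    rintro rfl
    exact huv (hi.trans hj.symm)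
  obtain ⟨f, hf, hne⟩ := hsep i j hij
  exact ⟨f, hf, by rwa [(hS f hf).eval_eq hi, (hS f hf).eval_eq hj]⟩

theorem parities_S3_rep_injective : Function.Injective fun i =>
    (subgraphParity edges (rep i), subgraphParity cherries (rep i),
      subgraphParity perfectMatchings (rep i),
      subgraphParity claws (rep i) + subgraphParity fourCycles (rep i)) := by
  decide

theorem parities_S4_rep_injective : Function.Injective fun i =>
    (subgraphParity edges (rep i), subgraphParity cherries (rep i),
      subgraphParity perfectMatchings (rep i),
      subgraphParity triangles (rep i) + subgraphParity fourCycles (rep i)) := by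
  decide

theorem isSepGraph_S3 : IsSepGraph {f1, f2, f3, f4 + f8} := by
  refine isSepGraph_of_separates_reps ?_ fun i j hij => ?_
  · simp only [Set.mem_insert_iff, Set.mem_singleton_iff, forall_eq_or_imp, forall_eq]
    exact ⟨isInv_orbitSum _, isInv_orbitSum _, isInv_orbitSum _,
      (isInv_orbitSum _).add (isInv_orbitSum _)⟩
  · have hne := parities_S3_rep_injective.ne hij
    simp only [ne_eq, Prod.mk.injEq, not_and_or] at hne
    simp only [Set.mem_insert_iff, Set.mem_singleton_iff, exists_eq_or_imp, exists_eq_left,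
      map_add, eval_f1, eval_f2, eval_f3, eval_f4, eval_f8]
    exact hne

theorem isSepGraph_S4 : IsSepGraph {f1, f2, f3, f5 + f8} := by
  refine isSepGraph_of_separates_reps ?_ fun i j hij => ?_
  · simp only [Set.mem_insert_iff, Set.mem_singleton_iff, forall_eq_or_imp, forall_eq]
    exact ⟨isInv_orbitSum _, isInv_orbitSum _, isInv_orbitSum _,
      (isInv_orbitSum _).add (isInv_orbitSum _)⟩
  · have hne := parities_S4_rep_injective.ne hij
    simp only [ne_eq, Prod.mk.injEq, not_and_or] at hne
    simp only [Set.mem_insert_iff, Set.mem_singleton_iff, exists_eq_or_imp, exists_eq_left,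
      map_add, eval_f1, eval_f2, eval_f3, eval_f5, eval_f8]
    exact hne

theorem four_le_card_of_isSepGraph (S : Finset (MvPolynomial (Edge 4) (ZMod 2)))
    (hS : IsSepGraph (S : Set (MvPolynomial (Edge 4) (ZMod 2)))) : 4 ≤ S.card := by
  have hinj : Function.Injective fun i (f : S) => eval (rep i) f.1 := by
    intro i j hij
    by_contra hne
    obtain ⟨f, hf, hfne⟩ := hS _ _ (not_graphSameOrbit_rep i j hne)
    exact hfne (congrFun hij ⟨f, hf⟩)
  have h11 : 11 ≤ 2 ^ S.card := by simpa using Fintype.card_le_of_injective _ hinj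
  by_contra! hS3
  have := Nat.pow_le_pow_right two_pos (Nat.le_of_lt_succ hS3)
  omega

theorem isSepGraph_homInv_four : IsSepGraph (HomInv 4) := by
  have hX : ∀ e, (X e : MvPolynomial (Edge 4) (ZMod 2)).IsHomogeneous 1 := isHomogeneous_X _
  have m1 : f1 ∈ HomInv 4 := ⟨isInv_orbitSum _, 1, by norm_num, (hX e12).orbitSum⟩
  have m2 : f2 ∈ HomInv 4 :=
    ⟨isInv_orbitSum _, 2, by norm_num, ((hX e12).mul (hX e13)).orbitSum⟩
  have m3 : f3 ∈ HomInv 4 :=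
    ⟨isInv_orbitSum _, 2, by norm_num, ((hX e12).mul (hX e34)).orbitSum⟩
  have m4 : f4 ∈ HomInv 4 :=
    ⟨isInv_orbitSum _, 3, by norm_num, (((hX e12).mul (hX e13)).mul (hX e14)).orbitSum⟩
  have m8 : f8 ∈ HomInv 4 := ⟨isInv_orbitSum _, 4, le_rfl,
    ((((hX e12).mul (hX e13)).mul (hX e24)).mul (hX e34)).orbitSum⟩
  refine isSepGraph_S3.of_determines ?_
  simp only [Set.mem_insert_iff, Set.mem_singleton_iff, forall_eq_or_imp, forall_eq]
  exact ⟨fun u v h => h f1 m1, fun u v h => h f2 m2, fun u v h => h f3 m3,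
    fun u v h => by rw [map_add, map_add, h f4 m4, h f8 m8]⟩

def square : Finset (Edge 4) := {e12, e24, e34, e13}

/-- The rotation `1 → 2 → 4 → 3 → 1` of the 4-cycle `square`, on 0-indexed vertices. -/
def squareRotation : Equiv.Perm (Fin 4) := ⟨![1, 3, 0, 2], ![2, 0, 3, 1], by decide, by decide⟩

theorem edgeMap_squareRotation_mem {e : Edge 4} (he : e ∈ square) :
    edgeMap squareRotation e ∈ square := by
  revert e
  decide

theorem edgeMap_squareRotation_pow_four (e : Edge 4) :
    edgeMap squareRotation (edgeMap squareRotation (edgeMap squareRotation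
      (edgeMap squareRotation e))) = e := by
  revert e
  decide

theorem four_le_degree_of_mapDomain_squareRotation {d : Edge 4 →₀ ℕ} (hd0 : d ≠ 0)
    (hsq : d.support ⊆ square) (hfix : d.mapDomain (edgeMap squareRotation) = d) :
    4 ≤ d.sum fun _ k => k := by
  have hrot : ∀ e, d (edgeMap squareRotation e) = d e := fun e => by
    conv_lhs => rw [← hfix]
    exact Finsupp.mapDomain_apply (edgeMap_injective _) d e
  have hcycle : ∀ e e', edgeMap squareRotation e = e' → d e' = d e := fun e e' h => h ▸ hrot e
  have h1 := hcycle e13 e12 (by decide)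
  have h2 := hcycle e12 e24 (by decide)
  have h3 := hcycle e24 e34 (by decide)
  have h4 := hcycle e34 e13 (by decide)
  have hsum : (d.sum fun _ k => k) = d e12 + (d e24 + (d e34 + d e13)) := by
    rw [Finsupp.sum, sum_subset hsq fun e _ he => Finsupp.notMem_support_iff.mp he, square,
      sum_insert (by decide), sum_insert (by decide), sum_insert (by decide), sum_singleton]
  obtain ⟨e, he⟩ := Finsupp.support_nonempty_iff.mpr hd0
  have hpos := Finsupp.mem_support_iff.mp he
  have hsqe := hsq he
  simp only [square, mem_insert, mem_singleton] at hsqe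
  rcases hsqe with rfl | rfl | rfl | rfl <;> omega

theorem two_dvd_card_square_monomials {f : MvPolynomial (Edge 4) (ZMod 2)}
    (hf : rename (edgeMap squareRotation) f = f) (hdeg : f.totalDegree < 4) :
    2 ∣ #{d ∈ f.support | d ≠ 0 ∧ d.support ⊆ square} := by
  set M := {d ∈ f.support | d ≠ 0 ∧ d.support ⊆ square}
  have hmaps : ∀ d ∈ M, d.mapDomain (edgeMap squareRotation) ∈ M := by
    intro d hd
    obtain ⟨hdf, hd0, hsq⟩ := mem_filter.mp hd
    refine mem_filter.mpr ⟨?_, ?_, ?_⟩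
    · rw [mem_support_iff, ← hf, coeff_rename_mapDomain _ (edgeMap_injective _)]
      exact mem_support_iff.mp hdf
    · exact fun h => hd0 (Finsupp.mapDomain_injective (edgeMap_injective _)
        (h.trans Finsupp.mapDomain_zero.symm))
    · rw [Finsupp.mapDomain_support_of_injective (edgeMap_injective _)]
      exact image_subset_iff.mpr fun e he => edgeMap_squareRotation_mem (hsq he)
  let rotate : Function.End M := fun d => ⟨_, hmaps d d.2⟩
  have hrotate : rotate ^ 2 ^ 2 = 1 := by
    funext d
    apply Subtype.ext
    change (((d.1.mapDomain _).mapDomain _).mapDomain _).mapDomain _ = d.1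
    simp only [← Finsupp.mapDomain_comp]
    conv_rhs => rw [← Finsupp.mapDomain_id (v := d.1)]
    congr
    exact funext edgeMap_squareRotation_pow_four
  have hfree : IsEmpty (Function.fixedPoints rotate) := by
    refine ⟨fun ⟨d, hd⟩ => ?_⟩
    obtain ⟨hdf, hd0, hsq⟩ := mem_filter.mp d.2
    have h4 := four_le_degree_of_mapDomain_squareRotation hd0 hsq (congrArg Subtype.val hd)
    have := le_totalDegree hdf
    omega
  have hmod := Equiv.Perm.card_fixedPoints_modEq (p := 2) (n := 2) hrotate
  rw [Fintype.card_coe, @Fintype.card_eq_zero _ _ hfree] at hmod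
  exact Nat.modEq_zero_iff_dvd.mp hmod

theorem eval_square_eq_eval_zero {f : MvPolynomial (Edge 4) (ZMod 2)}
    (hf : rename (edgeMap squareRotation) f = f) (hdeg : f.totalDegree < 4) :
    eval (fun e => if e ∈ square then 1 else 0) f = eval 0 f := by
  have h0 : (0 : Edge 4 → ZMod 2) = fun e => if e ∈ (∅ : Finset (Edge 4)) then 1 else 0 := by
    simp only [notMem_empty, if_false]
    rfl
  rw [h0, eval_indicator_eq_card, eval_indicator_eq_card, card_filter_support_subset _ square,
    Nat.cast_add, (ZMod.natCast_eq_zero_iff _ 2).mpr (two_dvd_card_square_monomials hf hdeg),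
    add_zero]

theorem not_isSepGraph_homInv_of_lt_four {d : ℕ} (hd : d < 4) : ¬ IsSepGraph (HomInv d) := by
  intro hsep
  have hnot : ¬ GraphSameOrbit 0 fun e => if e ∈ square then 1 else 0 := fun ⟨σ, hσ⟩ => by
    simpa [square] using hσ e12
  obtain ⟨f, ⟨hinv, n, hn, hhom⟩, hne⟩ := hsep _ _ hnot
  have hdeg : f.totalDegree < 4 := lt_of_le_of_lt hhom.totalDegree_le (by omega)
  exact hne (eval_square_eq_eval_zero (hinv squareRotation) hdeg).symm

/-- `S_3 = {f1, f2, f3, f4 + f8}` and `S_4 = {f1, f2, f3, f5 + f8}` are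
separating sets for `F_2[V]^{S_4}` of the smallest possible size `4`; in particular
`β_sep(F_2[V]^{S_4}) = 4`. -/
theorem stmt10 :
    -- S_3 and S_4 are separating sets
    IsSepGraph {f1, f2, f3, f4 + f8} ∧
    IsSepGraph {f1, f2, f3, f5 + f8} ∧
    -- of the smallest possible size: any separating set of invariants has ≥ 4 elements
    (∀ S : Finset (MvPolynomial (Edge 4) (ZMod 2)),
      (∀ f ∈ S, IsInv f) → IsSepGraph (S : Set (MvPolynomial (Edge 4) (ZMod 2))) →
      4 ≤ S.card) ∧
    -- β_sep = 4: homogeneous invariants of degree ≤ 4 separate, and 4 is least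
    IsSepGraph (HomInv 4) ∧ (∀ d < 4, ¬ IsSepGraph (HomInv d)) :=
  ⟨isSepGraph_S3, isSepGraph_S4, fun S _ hS => four_le_card_of_isSepGraph S hS,
    isSepGraph_homInv_four, fun _ hd => not_isSepGraph_homInv_of_lt_four hd⟩

end S4graphs
end
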